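/- For the 4-node graph G with edges (1,2), (1,3), (1,4), (2,3), (2,4) (directed respecting the ordering), and agents choosing greedily where agent i observes its in-neighbors, the greedy solution satisfies f(x^opt) ≤ 2 f(x^sol) for every normalized monotone submodular f and action sets X_1,...,X_4; hence γ(G) = 1/2. -/

import Mathlib

open Finset

/-- The 4-node graph with edges (1,2), (1,3), (1,4), (2,3), (2,4)
(0-indexed: all pairs i < j except (2,3)). -/
def E4 (i j : Fin 4) : Prop := i < j ∧ ¬ (i.val = 2 ∧ j.val = 3)

instance : DecidableRel E4 := fun i j => by unfold E4; infer_instance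

/-!
Write `a, b, c, d` for the greedy choices and `S = a ∪ b`. Every agent observes only agents
among the first two, so its observed set lies inside `S`. By submodularity the gain of adding
all optimal choices to `S` is at most the sum of the gains of each optimal choice over what
its agent observed, and by greediness each of these is at most the gain of the greedy choice.
The gains of `a` and `b` telescope to `f S`, so `f opt ≤ f (c ∪ S) + f (d ∪ S) ≤ 2 f sol`.
-/

section Marginal

variable {α : Type*} [DecidableEq α]

def marginal (f : Finset α → ℝ) (T S : Finset α) : ℝ := f (T ∪ S) - f S

variable {f : Finset α → ℝ}

theorem marginal_union (T U S : Finset α) :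
    marginal f (T ∪ U) S = marginal f T (U ∪ S) + marginal f U S := by
  simp only [marginal, union_assoc]
  ring

theorem marginal_empty_left (S : Finset α) : marginal f ∅ S = 0 := by
  simp [marginal]

variable (hmono : Monotone f)
  (hsub : ∀ A B : Finset α, A ⊆ B → ∀ x ∉ B, f (insert x B) - f B ≤ f (insert x A) - f A)
include hmono hsub

theorem marginal_anti_right (T : Finset α) {A B : Finset α} (hAB : A ⊆ B) :
    marginal f T B ≤ marginal f T A := by
  induction T using Finset.induction_on with
  | empty => simp [marginal_empty_left]
  | insert x T hx ih =>
    have hstep : marginal f {x} (T ∪ B) ≤ marginal f {x} (T ∪ A) := by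
      simp only [marginal, singleton_union]
      by_cases hxB : x ∈ T ∪ B
      · rw [insert_eq_self.2 hxB, sub_self, sub_nonneg]
        exact hmono (subset_insert _ _)
      · exact hsub _ _ (union_subset_union_right hAB) x hxB
    rw [insert_eq, marginal_union, marginal_union]
    linarith

theorem marginal_biUnion_le_sum {ι : Type*} [DecidableEq ι] (s : Finset ι)
    (O N : ι → Finset α) {S : Finset α} (hN : ∀ i ∈ s, N i ⊆ S) :
    marginal f (s.biUnion O) S ≤ ∑ i ∈ s, marginal f (O i) (N i) := by
  induction s using Finset.induction_on with
  | empty => simp [marginal_empty_left]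
  | insert j s hj ih =>
    rw [biUnion_insert, marginal_union, sum_insert hj]
    have hj_le : marginal f (O j) (s.biUnion O ∪ S) ≤ marginal f (O j) (N j) :=
      marginal_anti_right hmono hsub _
        ((hN j (mem_insert_self j s)).trans subset_union_right)
    linarith [ih fun i hi => hN i (mem_insert_of_mem hi)]

theorem apply_biUnion_le_add_sum_marginal {ι : Type*} [Fintype ι] [DecidableEq ι]
    (sol opt N : ι → Finset α) {S : Finset α} (hN : ∀ i, N i ⊆ S)
    (hgreedy : ∀ i, f (opt i ∪ N i) ≤ f (sol i ∪ N i)) :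
    f (univ.biUnion opt) ≤ f S + ∑ i, marginal f (sol i) (N i) := by
  have hopt_gain : marginal f (univ.biUnion opt) S ≤ ∑ i, marginal f (opt i) (N i) :=
    marginal_biUnion_le_sum hmono hsub univ opt N fun i _ => hN i
  have hgreedy_gain : ∑ i, marginal f (opt i) (N i) ≤ ∑ i, marginal f (sol i) (N i) :=
    sum_le_sum fun i _ => sub_le_sub_right (hgreedy i) _
  have hcover : f (univ.biUnion opt) ≤ f S + marginal f (univ.biUnion opt) S := by
    rw [marginal, add_sub_cancel]
    exact hmono subset_union_left
  linarith

end Marginal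

theorem E4_inNeighbors_zero : univ.filter (E4 · 0) = ∅ := by decide

theorem E4_inNeighbors_one : univ.filter (E4 · 1) = {0} := by decide

theorem E4_inNeighbors_two : univ.filter (E4 · 2) = {0, 1} := by decide

theorem E4_inNeighbors_three : univ.filter (E4 · 3) = {0, 1} := by decide

theorem E4_inNeighbors_subset (i : Fin 4) : univ.filter (E4 · i) ⊆ {0, 1} := by
  fin_cases i <;> decide

theorem four_node_graph_half_bound_general {α : Type*} [DecidableEq α]
    (f : Finset α → ℝ)
    (hnorm : f ∅ = 0)
    (hmono : ∀ A B : Finset α, A ⊆ B → f A ≤ f B)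
    (hsub : ∀ A B : Finset α, A ⊆ B → ∀ x ∉ B,
      f (insert x B) - f B ≤ f (insert x A) - f A)
    (X : Fin 4 → Finset (Finset α))
    (sol opt : Fin 4 → Finset α)
    (hgreedy : ∀ i : Fin 4, ∀ y ∈ X i,
      f (y ∪ (univ.filter (fun j => E4 j i)).biUnion sol) ≤
        f (sol i ∪ (univ.filter (fun j => E4 j i)).biUnion sol))
    (hoptX : ∀ i, opt i ∈ X i) :
    f (univ.biUnion opt) ≤ 2 * f (univ.biUnion sol) := by
  set S := ({0, 1} : Finset (Fin 4)).biUnion sol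
  have hmono' : Monotone f := fun A B h => hmono A B h
  have key := apply_biUnion_le_add_sum_marginal hmono' hsub sol opt
    (fun i => (univ.filter (E4 · i)).biUnion sol) (S := S)
    (fun i => biUnion_subset_biUnion_of_subset_left _ (E4_inNeighbors_subset i))
    (fun i => hgreedy i _ (hoptX i))
  have hS : S = sol 0 ∪ sol 1 := by simp [S, biUnion_insert]
  rw [Fin.sum_univ_four, E4_inNeighbors_zero, E4_inNeighbors_one, E4_inNeighbors_two,
    E4_inNeighbors_three] at key
  simp only [marginal, biUnion_empty, singleton_biUnion, union_empty, hnorm] at key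
  have hba : f (sol 1 ∪ sol 0) = f S := by rw [hS, union_comm]
  have hS_sub : S ⊆ univ.biUnion sol := biUnion_subset_biUnion_of_subset_left _ (subset_univ _)
  have hc : f (sol 2 ∪ S) ≤ f (univ.biUnion sol) :=
    hmono _ _ (union_subset (subset_biUnion_of_mem sol (mem_univ 2)) hS_sub)
  have hd : f (sol 3 ∪ S) ≤ f (univ.biUnion sol) :=
    hmono _ _ (union_subset (subset_biUnion_of_mem sol (mem_univ 3)) hS_sub)
  linarith

/-- for the 4-node graph with edges (1,2),(1,3),(1,4),(2,3),(2,4),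
the generalized distributed greedy solution satisfies `f(x^opt) ≤ 2 f(x^sol)`
for every normalized monotone submodular `f` and action sets `X`. -/
theorem four_node_graph_half_bound {α : Type*} [DecidableEq α]
    (f : Finset α → ℝ)
    (hnorm : f ∅ = 0)
    (hmono : ∀ A B : Finset α, A ⊆ B → f A ≤ f B)
    (hsub : ∀ A B : Finset α, A ⊆ B → ∀ x ∉ B,
      f (insert x B) - f B ≤ f (insert x A) - f A)
    (X : Fin 4 → Finset (Finset α))
    (sol opt : Fin 4 → Finset α)
    (hsolX : ∀ i, sol i ∈ X i)
    (hgreedy : ∀ i : Fin 4, ∀ y ∈ X i,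
      f (y ∪ (univ.filter (fun j => E4 j i)).biUnion sol) ≤
        f (sol i ∪ (univ.filter (fun j => E4 j i)).biUnion sol))
    (hoptX : ∀ i, opt i ∈ X i)
    (hopt : ∀ y : Fin 4 → Finset α, (∀ i, y i ∈ X i) →
      f (univ.biUnion y) ≤ f (univ.biUnion opt)) :
    f (univ.biUnion opt) ≤ 2 * f (univ.biUnion sol) :=
  four_node_graph_half_bound_general f hnorm hmono hsub X sol opt hgreedy hoptX
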